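/- arXiv:2007.09988 — 6 statements merged into one kernel-verified Lean document; each statement's English description precedes it below -/
import Mathlib

section
/- Universal property of fibrations: let f : X → Y be a cubespace morphism and g : Y → Z a map between cubespaces such that f and g ∘ f are fibrations and f is surjective. Then g is a cubespace morphism and a fibration. -/
open Function Set

/-- The all-ones vertex `1⃗` of the discrete cube `{0,1}^k`. -/
def topVtx (k : ℕ) : Fin k → Bool := fun _ => true

/-- A family of cube sets on a space `X`: for each `k`, a set of `k`-configurations. -/
structure CubeFamily (X : Type*) where
  cubes : ∀ k : ℕ, Set ((Fin k → Bool) → X)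

/-- A morphism of discrete cubes: each coordinate function is constantly `0`,
constantly `1`, a coordinate `ω i`, or a negated coordinate `!ω i`. -/
def IsDiscreteCubeMorphism {k l : ℕ} (ρ : (Fin k → Bool) → (Fin l → Bool)) : Prop :=
  ∀ j : Fin l, (∀ ω, ρ ω j = false) ∨ (∀ ω, ρ ω j = true) ∨
    (∃ i : Fin k, ∀ ω, ρ ω j = ω i) ∨ (∃ i : Fin k, ∀ ω, ρ ω j = !(ω i))

/-- The cubespace axioms: cube sets are closed, `C^0(X) = X`, and cubes are stable
under precomposition with morphisms of discrete cubes. -/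
def CubeFamily.IsCubespace {X : Type*} [TopologicalSpace X] (S : CubeFamily X) : Prop :=
  (∀ k, IsClosed (S.cubes k)) ∧ S.cubes 0 = Set.univ ∧
    ∀ {k l : ℕ} (ρ : (Fin k → Bool) → (Fin l → Bool)), IsDiscreteCubeMorphism ρ →
      ∀ c ∈ S.cubes l, (fun ω => c (ρ ω)) ∈ S.cubes k

/-- A cubespace morphism: a continuous map sending cubes to cubes. -/
def IsMorphism {X Y : Type*} [TopologicalSpace X] [TopologicalSpace Y]
    (S : CubeFamily X) (T : CubeFamily Y) (f : X → Y) : Prop :=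
  Continuous f ∧ ∀ k, ∀ c ∈ S.cubes k, (fun ω => f (c ω)) ∈ T.cubes k

/-- `lam` is a `k`-corner: each lower face `{ω : ω i = 0}` restricts to a `(k-1)`-cube.
(The restriction of `lam` to the face `{ω : ω i = 0}` is a `(k-1)`-cube iff the
degenerate configuration `ω ↦ lam (update ω i false)` is a `k`-cube, by the
discrete-cube-morphism axiom; the value of `lam` at `topVtx k` is irrelevant here.) -/
def IsCubeCorner {X : Type*} (S : CubeFamily X) {k : ℕ} (lam : (Fin k → Bool) → X) : Prop :=
  ∀ i : Fin k, (fun ω => lam (Function.update ω i false)) ∈ S.cubes k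

/-- Relative `k`-completion for `f : X → Y`: every `k`-corner in `X` whose `f`-image
extends to a `k`-cube `c` of `Y` can be completed to a `k`-cube of `X` lying over `c`. -/
def HasCompletionAt {X Y : Type*} (S : CubeFamily X) (T : CubeFamily Y) (f : X → Y)
    (k : ℕ) : Prop :=
  ∀ (lam : (Fin k → Bool) → X) (c : (Fin k → Bool) → Y), IsCubeCorner S lam → c ∈ T.cubes k →
    (∀ ω, ω ≠ topVtx k → f (lam ω) = c ω) →
    ∃ c₀ ∈ S.cubes k, (∀ ω, ω ≠ topVtx k → c₀ ω = lam ω) ∧ (fun ω => f (c₀ ω)) = c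

/-- A fibration: a cubespace morphism with `k`-completion for all `k ≥ 0`. -/
def IsFibration {X Y : Type*} [TopologicalSpace X] [TopologicalSpace Y]
    (S : CubeFamily X) (T : CubeFamily Y) (f : X → Y) : Prop :=
  IsMorphism S T f ∧ ∀ k, HasCompletionAt S T f k

/-- Relative `k`-uniqueness: two `k`-cubes agreeing off the top vertex with equal
`f`-images are equal. -/
def HasUniquenessAt {X Y : Type*} (S : CubeFamily X) (T : CubeFamily Y) (f : X → Y)
    (k : ℕ) : Prop :=
  ∀ c ∈ S.cubes k, ∀ c' ∈ S.cubes k, (∀ ω, ω ≠ topVtx k → c ω = c' ω) →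
    (fun ω => f (c ω)) = (fun ω => f (c' ω)) → c = c'

/-- An `s`-fibration: a fibration with `(s+1)`-uniqueness. -/
def IsSFibration {X Y : Type*} [TopologicalSpace X] [TopologicalSpace Y]
    (S : CubeFamily X) (T : CubeFamily Y) (f : X → Y) (s : ℕ) : Prop :=
  IsFibration S T f ∧ HasUniquenessAt S T f (s + 1)

/-- Absolute fibrancy: every `k`-corner completes to a `k`-cube. -/
def IsFibrant {X : Type*} (S : CubeFamily X) : Prop :=
  ∀ (k : ℕ) (lam : (Fin k → Bool) → X), IsCubeCorner S lam →
    ∃ c₀ ∈ S.cubes k, ∀ ω, ω ≠ topVtx k → c₀ ω = lam ω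

/-- Absolute `k`-uniqueness. -/
def HasUnique {X : Type*} (S : CubeFamily X) (k : ℕ) : Prop :=
  ∀ c ∈ S.cubes k, ∀ c' ∈ S.cubes k, (∀ ω, ω ≠ topVtx k → c ω = c' ω) → c = c'

/-- Ergodicity: every pair of points is a `1`-cube. -/
def IsErgodic {X : Type*} (S : CubeFamily X) : Prop := S.cubes 1 = Set.univ

/-- Concatenation `[c₁, c₂]` of two `k`-configurations along the last coordinate. -/
def concatCube {X : Type*} {k : ℕ} (c₁ c₂ : (Fin k → Bool) → X) :
    (Fin (k + 1) → Bool) → X :=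
  fun ω => if ω (Fin.last k) = true then c₂ (fun i => ω i.castSucc)
           else c₁ (fun i => ω i.castSucc)

/-- The gluing property. -/
def IsGluing {X : Type*} (S : CubeFamily X) : Prop :=
  ∀ (k : ℕ) (c₁ c₂ c₃ : (Fin k → Bool) → X), c₁ ∈ S.cubes k → c₂ ∈ S.cubes k →
    c₃ ∈ S.cubes k → concatCube c₁ c₂ ∈ S.cubes (k + 1) →
    concatCube c₂ c₃ ∈ S.cubes (k + 1) → concatCube c₁ c₃ ∈ S.cubes (k + 1)

/-- The `s`-th canonical relation `x ∼ₛ x'`. -/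
def CanonRel {X : Type*} (S : CubeFamily X) (s : ℕ) (x x' : X) : Prop :=
  ∃ c ∈ S.cubes (s + 1), ∃ c' ∈ S.cubes (s + 1),
    (∀ ω, ω ≠ topVtx (s + 1) → c ω = c' ω) ∧ c (topVtx (s + 1)) = x ∧ c' (topVtx (s + 1)) = x'

/-- The `s`-th canonical relation relative to `f` : `x ∼_{f,s} x'`. -/
def RelCanonRel {X Y : Type*} (S : CubeFamily X) (f : X → Y) (s : ℕ) (x x' : X) : Prop :=
  CanonRel S s x x' ∧ f x = f x'

section FibrationUP

open Classical

variable {X Y : Type*} [TopologicalSpace X] [TopologicalSpace Y]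

lemma constMemCubes {S : CubeFamily X} (hS : S.IsCubespace) (k : ℕ) (x : X) :
    (fun _ : Fin k → Bool => x) ∈ S.cubes k := by
  have h0 : (fun _ : Fin 0 → Bool => x) ∈ S.cubes 0 := by
    rw [hS.2.1]; exact Set.mem_univ _
  exact hS.2.2 (fun _ => fun j : Fin 0 => j.elim0) (fun j => j.elim0) _ h0

lemma faceMemCubes {S : CubeFamily X} (hS : S.IsCubespace) {k : ℕ}
    {c : (Fin k → Bool) → X} (hc : c ∈ S.cubes k) (i : Fin k) :
    (fun ω => c (Function.update ω i false)) ∈ S.cubes k := by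
  refine hS.2.2 (fun ω => Function.update ω i false) ?_ c hc
  intro j
  rcases eq_or_ne j i with h | h
  · subst h; left; intro ω; simp
  · right; right; left
    exact ⟨j, fun ω => Function.update_of_ne h _ _⟩

lemma liftCornerAux {S : CubeFamily X} {T : CubeFamily Y}
    (hS : S.IsCubespace) (hT : T.IsCubespace)
    {f : X → Y} (hf : IsFibration S T f) (hsurj : Function.Surjective f)
    {k : ℕ} {c : (Fin k → Bool) → Y} (hc : IsCubeCorner T c) (m : ℕ) :
    ∃ L : (Fin k → Bool) → X, (∀ v, f (L v) = c v) ∧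
      ∀ v : Fin k → Bool, v ≠ topVtx k →
        (Finset.univ.filter (fun i => v i = true)).card ≤ m →
        (fun ω : Fin k → Bool => L (fun i => ω i && v i)) ∈ S.cubes k := by
  classical
  induction m with
  | zero =>
    refine ⟨fun v => Classical.choose (hsurj (c v)),
      fun v => Classical.choose_spec (hsurj (c v)), ?_⟩
    intro v hv hcard
    have hz : ∀ i, v i = false := by
      intro i
      have hemp := Finset.card_eq_zero.mp (Nat.le_zero.mp hcard)
      by_contra h
      rw [Bool.not_eq_false] at h
      have hi : i ∈ Finset.univ.filter (fun i => v i = true) :=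
        Finset.mem_filter.mpr ⟨Finset.mem_univ _, h⟩
      rw [hemp] at hi
      exact absurd hi (Finset.notMem_empty i)
    have harg : ∀ ω : Fin k → Bool, (fun i => ω i && v i) = fun _ => false := by
      intro ω; funext i; rw [hz i, Bool.and_false]
    have heq : (fun ω : Fin k → Bool =>
        Classical.choose (hsurj (c (fun i => ω i && v i))))
        = fun _ => Classical.choose (hsurj (c (fun _ => false))) := by
      funext ω
      rw [harg ω]
    rw [heq]
    exact constMemCubes hS k _
  | succ m ih =>
    obtain ⟨L, hL1, hL2⟩ := ih
    have key : ∀ v : Fin k → Bool, v ≠ topVtx k →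
        (Finset.univ.filter (fun i => v i = true)).card = m + 1 →
        ∃ x : X, f x = c v ∧
          (fun ω : Fin k → Bool =>
            if (fun i => ω i && v i) = v then x else L (fun i => ω i && v i))
            ∈ S.cubes k := by
      intro v hv hcard
      set s : Finset (Fin k) := Finset.univ.filter (fun i => v i = true) with hs
      have hmem : ∀ i, v i = true → i ∈ s :=
        fun i h => Finset.mem_filter.mpr ⟨Finset.mem_univ _, h⟩
      have hmem' : ∀ i, i ∈ s → v i = true := fun i h => (Finset.mem_filter.mp h).2
      set e := s.orderIsoOfFin hcard with he
      set emb : (Fin (m+1) → Bool) → (Fin k → Bool) :=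
        fun η i => if h : v i = true then η (e.symm ⟨i, hmem i h⟩) else false with hemb
      have hembmor : IsDiscreteCubeMorphism emb := by
        intro i
        by_cases h : v i = true
        · right; right; left
          exact ⟨e.symm ⟨i, hmem i h⟩, fun η => by simp [hemb, h]⟩
        · left; intro η; simp [hemb, h]
      have hembtop : emb (topVtx (m+1)) = v := by
        funext i
        rcases Bool.eq_false_or_eq_true (v i) with h | h
        · simp [hemb, h, topVtx]
        · simp [hemb, h]
      have hembπ : ∀ ω : Fin k → Bool,
          emb (fun j => ω (e j : Fin k)) = fun i => ω i && v i := by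
        intro ω; funext i
        rcases Bool.eq_false_or_eq_true (v i) with h | h
        · have h2 : e (e.symm ⟨i, hmem i h⟩) = ⟨i, hmem i h⟩ := e.apply_symm_apply _
          simp [hemb, h, h2]
        · simp [hemb, h]
      have hcorner : IsCubeCorner S (fun η => L (emb η)) := by
        intro j
        set i0 : Fin k := (e j : Fin k) with hi0
        have hvi0 : v i0 = true := hmem' _ (e j).2
        set v' : Fin k → Bool := Function.update v i0 false with hv'
        have hsub : Finset.univ.filter (fun i => v' i = true) ⊆ s.erase i0 := by
          intro i hi
          have hi' := (Finset.mem_filter.mp hi).2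
          have hne : i ≠ i0 := by
            intro h; rw [h, hv'] at hi'; simp at hi'
          refine Finset.mem_erase.mpr ⟨hne, hmem i ?_⟩
          rw [hv', Function.update_of_ne hne] at hi'; exact hi'
        have hcard' : (Finset.univ.filter (fun i => v' i = true)).card ≤ m := by
          calc (Finset.univ.filter (fun i => v' i = true)).card
              ≤ (s.erase i0).card := Finset.card_le_card hsub
            _ = m := by rw [Finset.card_erase_of_mem (e j).2, hcard]; omega
        have hv'ne : v' ≠ topVtx k := by
          intro h
          have h2 := congrFun h i0
          rw [hv'] at h2
          simp [topVtx] at h2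
        have hC := hL2 v' hv'ne hcard'
        set ρ' : (Fin (m+1) → Bool) → (Fin k → Bool) :=
          fun η => emb (Function.update η j false) with hρ'
        have hρ'false : ∀ η i, v' i = false → ρ' η i = false := by
          intro η i hvi
          rcases Bool.eq_false_or_eq_true (v i) with h | h
          · have hii0 : i = i0 := by
              by_contra hne
              rw [hv', Function.update_of_ne hne, h] at hvi
              exact absurd hvi (by simp)
            have h3 : ∀ hp : i0 ∈ s, e.symm ⟨i0, hp⟩ = j := by
              intro hp
              have h4 : (⟨i0, hp⟩ : {x // x ∈ s}) = e j := rfl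
              rw [h4, OrderIso.symm_apply_apply]
            rw [hii0]
            show emb (Function.update η j false) i0 = false
            rw [hemb]
            show (if hh : v i0 = true
              then Function.update η j false (e.symm ⟨i0, hmem i0 hh⟩)
              else false) = false
            rw [dif_pos hvi0, h3, Function.update_self]
          · simp [hρ', hemb, h]
        have hρ'mor : IsDiscreteCubeMorphism ρ' := by
          intro i
          rcases Bool.eq_false_or_eq_true (v' i) with h | h
          swap
          · left; intro η; exact hρ'false η i h
          · have hne : i ≠ i0 := by
              intro hh; rw [hh, hv'] at h; simp at h
            have hvi : v i = true := by
              rw [hv', Function.update_of_ne hne] at h; exact h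
            right; right; left
            refine ⟨e.symm ⟨i, hmem i hvi⟩, fun η => ?_⟩
            have hj : e.symm ⟨i, hmem i hvi⟩ ≠ j := by
              intro hh
              apply hne
              have h5 := congrArg e hh
              rw [OrderIso.apply_symm_apply] at h5
              exact congrArg Subtype.val h5
            simp [hρ', hemb, hvi, Function.update_of_ne hj]
        have heq : (fun η => L (emb (Function.update η j false)))
            = fun η => L (fun i => ρ' η i && v' i) := by
          funext η
          show L (ρ' η) = L (fun i => ρ' η i && v' i)
          congr 1
          funext i
          rcases Bool.eq_false_or_eq_true (v' i) with h | h
          · rw [h, Bool.and_true]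
          · rw [hρ'false η i h, Bool.false_and]
        show (fun η => L (emb (Function.update η j false))) ∈ S.cubes (m+1)
        rw [heq]
        exact hS.2.2 ρ' hρ'mor _ hC
      have htarget : (fun η => c (emb η)) ∈ T.cubes (m+1) := by
        have hex : ∃ i0, v i0 = false := by
          by_contra h
          push_neg at h
          apply hv
          funext i
          have h2 := h i
          show v i = true
          rcases Bool.eq_false_or_eq_true (v i) with htt | hff
          · exact htt
          · exact absurd hff h2
        obtain ⟨i0, hi0⟩ := hex
        have hface := hc i0
        have heq : (fun η => c (emb η))
            = fun η => c (Function.update (emb η) i0 false) := by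
          funext η
          congr 1
          funext i
          rcases eq_or_ne i i0 with h | h
          · rw [h, Function.update_self]
            simp [hemb, hi0]
          · rw [Function.update_of_ne h]
        rw [heq]
        exact hT.2.2 emb hembmor _ hface
      obtain ⟨c₀, hc₀S, hc₀agree, hc₀f⟩ :=
        hf.2 (m+1) (fun η => L (emb η)) (fun η => c (emb η)) hcorner htarget
          (fun η _ => hL1 (emb η))
      refine ⟨c₀ (topVtx (m+1)), ?_, ?_⟩
      · have h6 := congrFun hc₀f (topVtx (m+1))
        rw [hembtop] at h6
        exact h6
      · set π : (Fin k → Bool) → (Fin (m+1) → Bool) := fun ω j => ω (e j : Fin k) with hπ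
        have hπmor : IsDiscreteCubeMorphism π :=
          fun j => Or.inr (Or.inr (Or.inl ⟨(e j : Fin k), fun ω => rfl⟩))
        have heq : (fun ω : Fin k → Bool =>
            if (fun i => ω i && v i) = v then c₀ (topVtx (m+1))
            else L (fun i => ω i && v i)) = fun ω => c₀ (π ω) := by
          funext ω
          by_cases hw : (fun i => ω i && v i) = v
          · rw [if_pos hw]
            have hπtop : π ω = topVtx (m+1) := by
              funext j
              show ω (e j : Fin k) = true
              have h1 : v (e j : Fin k) = true := hmem' _ (e j).2
              have h2 := congrFun hw (e j : Fin k)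
              rw [h1, Bool.and_true] at h2
              exact h2
            rw [hπtop]
          · rw [if_neg hw]
            have hπne : π ω ≠ topVtx (m+1) := by
              intro h
              apply hw
              rw [← hembπ ω]
              show emb (π ω) = v
              rw [h]
              exact hembtop
            rw [hc₀agree (π ω) hπne]
            show L (fun i => ω i && v i) = L (emb (π ω))
            rw [show emb (π ω) = fun i => ω i && v i from hembπ ω]
        rw [heq]
        exact hS.2.2 π hπmor _ hc₀S
    have key' : ∀ v : Fin k → Bool, ∃ x : X,
        v ≠ topVtx k → (Finset.univ.filter (fun i => v i = true)).card = m + 1 →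
          f x = c v ∧ (fun ω : Fin k → Bool =>
            if (fun i => ω i && v i) = v then x else L (fun i => ω i && v i))
            ∈ S.cubes k := by
      intro v
      by_cases h : v ≠ topVtx k ∧
          (Finset.univ.filter (fun i => v i = true)).card = m + 1
      · obtain ⟨x, hx1, hx2⟩ := key v h.1 h.2
        exact ⟨x, fun _ _ => ⟨hx1, hx2⟩⟩
      · exact ⟨L v, fun h1 h2 => absurd ⟨h1, h2⟩ h⟩
    choose F hF using key'
    have hF1 : ∀ v, v ≠ topVtx k →
        (Finset.univ.filter (fun i => v i = true)).card = m + 1 → f (F v) = c v :=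
      fun v h1 h2 => (hF v h1 h2).1
    have hF2 : ∀ v, v ≠ topVtx k →
        (Finset.univ.filter (fun i => v i = true)).card = m + 1 →
        (fun ω : Fin k → Bool =>
          if (fun i => ω i && v i) = v then F v else L (fun i => ω i && v i))
          ∈ S.cubes k :=
      fun v h1 h2 => (hF v h1 h2).2
    set L' : (Fin k → Bool) → X := fun w =>
      if h : w ≠ topVtx k ∧ (Finset.univ.filter (fun i => w i = true)).card = m + 1
      then F w else L w with hL'
    have hL'eq1 : ∀ w, w ≠ topVtx k →
        (Finset.univ.filter (fun i => w i = true)).card = m + 1 → L' w = F w := by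
      intro w h1 h2
      simp only [hL']
      rw [dif_pos ⟨h1, h2⟩]
    have hL'eq2 : ∀ w, ¬(w ≠ topVtx k ∧
        (Finset.univ.filter (fun i => w i = true)).card = m + 1) → L' w = L w := by
      intro w h1
      simp only [hL']
      rw [dif_neg h1]
    refine ⟨L', ?_, ?_⟩
    · intro v
      by_cases h : v ≠ topVtx k ∧
          (Finset.univ.filter (fun i => v i = true)).card = m + 1
      · rw [hL'eq1 v h.1 h.2]; exact hF1 v h.1 h.2
      · rw [hL'eq2 v h]; exact hL1 v
    · intro v hv hcard
      have hsub : ∀ ω : Fin k → Bool,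
          Finset.univ.filter (fun i => (ω i && v i) = true)
            ⊆ Finset.univ.filter (fun i => v i = true) := by
        intro ω i hi
        have h2 := (Finset.mem_filter.mp hi).2
        exact Finset.mem_filter.mpr
          ⟨Finset.mem_univ _, ((Bool.and_eq_true _ _).mp h2).2⟩
      rcases Nat.lt_or_ge (Finset.univ.filter (fun i => v i = true)).card (m+1)
        with hlt | hge
      · have hle := Nat.lt_succ_iff.mp hlt
        have heq : (fun ω : Fin k → Bool => L' (fun i => ω i && v i))
            = fun ω => L (fun i => ω i && v i) := by
          funext ω
          have hcw : (Finset.univ.filter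
              (fun i => (ω i && v i) = true)).card ≤ m :=
            le_trans (Finset.card_le_card (hsub ω)) hle
          exact hL'eq2 _ (fun hcon =>
            absurd hcon.2 (Nat.ne_of_lt (Nat.lt_succ_of_le hcw)))
        rw [heq]
        exact hL2 v hv hle
      · have hEq : (Finset.univ.filter (fun i => v i = true)).card = m + 1 :=
          le_antisymm hcard hge
        have heq : (fun ω : Fin k → Bool => L' (fun i => ω i && v i))
            = fun ω => if (fun i => ω i && v i) = v then F v
              else L (fun i => ω i && v i) := by
          funext ω
          by_cases hwv : (fun i => ω i && v i) = v
          · rw [if_pos hwv, hwv]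
            exact hL'eq1 v hv hEq
          · rw [if_neg hwv]
            refine hL'eq2 _ ?_
            rintro ⟨hw1, hw2⟩
            apply hwv
            have hfeq : Finset.univ.filter (fun i => (ω i && v i) = true)
                = Finset.univ.filter (fun i => v i = true) :=
              Finset.eq_of_subset_of_card_le (hsub ω) (by rw [hw2, hEq])
            funext i
            rcases Bool.eq_false_or_eq_true (v i) with h | h
            swap
            · rw [h, Bool.and_false]
            · have hi : i ∈ Finset.univ.filter (fun i => (ω i && v i) = true) := by
                rw [hfeq]
                exact Finset.mem_filter.mpr ⟨Finset.mem_univ _, h⟩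
              have h3 := (Finset.mem_filter.mp hi).2
              rw [h3, h]
        rw [heq]
        exact hF2 v hv hEq

lemma liftCorner {S : CubeFamily X} {T : CubeFamily Y}
    (hS : S.IsCubespace) (hT : T.IsCubespace)
    {f : X → Y} (hf : IsFibration S T f) (hsurj : Function.Surjective f)
    {k : ℕ} {c : (Fin k → Bool) → Y} (hc : IsCubeCorner T c) :
    ∃ L : (Fin k → Bool) → X, (∀ v, f (L v) = c v) ∧ IsCubeCorner S L := by
  obtain ⟨L, h1, h2⟩ := liftCornerAux hS hT hf hsurj hc k
  refine ⟨L, h1, ?_⟩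
  intro i
  have hv : Function.update (topVtx k) i false ≠ topVtx k := by
    intro h
    have h2 := congrFun h i
    simp [topVtx] at h2
  have hcard : (Finset.univ.filter
      (fun j => Function.update (topVtx k) i false j = true)).card ≤ k := by
    calc (Finset.univ.filter
          (fun j => Function.update (topVtx k) i false j = true)).card
        ≤ Finset.univ.card := Finset.card_filter_le _ _
      _ = k := by simp
  have h3 := h2 _ hv hcard
  have heq : (fun ω : Fin k → Bool =>
      L (fun j => ω j && Function.update (topVtx k) i false j))
      = fun ω => L (Function.update ω i false) := by
    funext ω
    congr 1
    funext j
    rcases eq_or_ne j i with h | h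
    · rw [h, Function.update_self, Function.update_self, Bool.and_false]
    · rw [Function.update_of_ne h, Function.update_of_ne h]
      rw [show topVtx k j = true from rfl, Bool.and_true]
  rw [← heq]
  exact h3

lemma liftCube {S : CubeFamily X} {T : CubeFamily Y}
    (hS : S.IsCubespace) (hT : T.IsCubespace)
    {f : X → Y} (hf : IsFibration S T f) (hsurj : Function.Surjective f)
    {k : ℕ} {c : (Fin k → Bool) → Y} (hc : c ∈ T.cubes k) :
    ∃ c₀ ∈ S.cubes k, ∀ ω, f (c₀ ω) = c ω := by
  have hcorner : IsCubeCorner T c := fun i => faceMemCubes hT hc i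
  obtain ⟨L, h1, h2⟩ := liftCorner hS hT hf hsurj hcorner
  obtain ⟨c₀, hc₀, _, hf0⟩ := hf.2 k L c h2 hc (fun ω _ => h1 ω)
  exact ⟨c₀, hc₀, fun ω => congrFun hf0 ω⟩

end FibrationUP

/-- universal property of fibrations: if `f : X → Y` is a surjective
fibration and `g ∘ f : X → Z` is a fibration, then `g` is a cubespace morphism and a
fibration (the conclusion `IsFibration T U g` contains both claims). -/
theorem fibration_universal_property {X Y Z : Type*}
    [MetricSpace X] [MetricSpace Y] [MetricSpace Z] [CompactSpace X] [CompactSpace Y]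
    (S : CubeFamily X) (T : CubeFamily Y) (U : CubeFamily Z)
    (hS : S.IsCubespace) (hT : T.IsCubespace) (hU : U.IsCubespace)
    (f : X → Y) (g : Y → Z) (hf : IsFibration S T f) (hsurj : Function.Surjective f)
    (hgf : IsFibration S U (g ∘ f)) :
    IsFibration T U g := by
  constructor
  · constructor
    · have hq : Topology.IsQuotientMap f := (hf.1.1.isClosedMap).isQuotientMap hf.1.1 hsurj
      exact hq.continuous_iff.mpr hgf.1.1
    · intro k c hcT
      obtain ⟨c₀, hc₀, hfc₀⟩ := liftCube hS hT hf hsurj hcT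
      have hcu := hgf.1.2 k c₀ hc₀
      have heq : (fun ω => g (c ω)) = fun ω => (g ∘ f) (c₀ ω) := by
        funext ω
        rw [Function.comp_apply, hfc₀]
      rw [heq]
      exact hcu
  · intro k lam cz hlam hcz hmatch
    obtain ⟨L, h1, h2⟩ := liftCorner hS hT hf hsurj hlam
    obtain ⟨d, hdS, hdagree, hdf⟩ := hgf.2 k L cz h2 hcz
      (fun ω hω => by rw [Function.comp_apply, h1]; exact hmatch ω hω)
    refine ⟨fun ω => f (d ω), hf.1.2 k d hdS, fun ω hω => ?_, ?_⟩
    · show f (d ω) = lam ω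
      rw [hdagree ω hω, h1]
    · exact hdf
end

section
/- Let f : X → Y, g : Y → Z and h : X → Z be cubespace morphisms with h = g ∘ f. If h has k-completion and g has k-uniqueness, then f has k-completion, i.e., any k-corner λ of X such that f ∘ λ = c|_{⌞^k} for some k-cube c of Y can be completed to a k-cube of X lying over c. -/
open Function Set

/-- if `h = g ∘ f`, `h` has `k`-completion and `g` has `k`-uniqueness,
then `f` has `k`-completion. -/
theorem inner_completion {X Y Z : Type*} [MetricSpace X] [MetricSpace Y] [MetricSpace Z]
    (S : CubeFamily X) (T : CubeFamily Y) (U : CubeFamily Z)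
    (hS : S.IsCubespace) (hT : T.IsCubespace) (hU : U.IsCubespace)
    (f : X → Y) (g : Y → Z) (h : X → Z)
    (hf : IsMorphism S T f) (hg : IsMorphism T U g) (hh : IsMorphism S U h)
    (hcomp : h = g ∘ f) (k : ℕ)
    (hcompl : HasCompletionAt S U h k) (huniq : HasUniquenessAt T U g k) :
    HasCompletionAt S T f k := by
  intro lam c hlam hc hagree
  obtain ⟨c₀, hc₀, hc₀agree, hc₀img⟩ :=
    hcompl lam (fun ω => g (c ω)) hlam (hg.2 k c hc) (by
      intro ω hω
      simp only [hcomp, comp_apply, hagree ω hω])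
  refine ⟨c₀, hc₀, hc₀agree, ?_⟩
  refine huniq _ (hf.2 k c₀ hc₀) c hc ?_ ?_
  · intro ω hω
    rw [hc₀agree ω hω, hagree ω hω]
  · have := hc₀img
    simp only [hcomp, comp_apply] at this
    exact this
end

section
/- Fibrations are stable under inverse limits: if X = lim← X_i is an inverse limit of cubespaces along maps p_{i,i+1} : X_{i+1} → X_i, each of which is a fibration, then the induced projection f : X → X_0 is a fibration. Moreover, if every p_{i,i+1} has (s+1)-uniqueness, then f has (s+1)-uniqueness. -/
open Function Set

/-- fibrations are stable under inverse limits.  Given an inverse system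
of cubespaces `X i` with connecting fibrations `p i : X (i+1) → X i`, and a space `L`
with projections `proj i : L → X i` realizing the inverse limit (compatible, jointly
separating points, and attaining every compatible sequence), whose cubes are the
inverse limits of the cubes of the `X i`, the induced projection `proj 0 : L → X 0`
is a fibration; moreover if every `p i` has `(s+1)`-uniqueness, so does `proj 0`. -/
theorem inverse_limit_fibration
    {X : ℕ → Type*} [∀ i, MetricSpace (X i)] [∀ i, CompactSpace (X i)]
    (S : ∀ i, CubeFamily (X i)) (hS : ∀ i, (S i).IsCubespace)
    (p : ∀ i, X (i + 1) → X i) (hp : ∀ i, IsFibration (S (i + 1)) (S i) (p i))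
    {L : Type*} [MetricSpace L] (SL : CubeFamily L)
    (proj : ∀ i, L → X i) (hcont : ∀ i, Continuous (proj i))
    (hcompat : ∀ (i : ℕ) (x : L), p i (proj (i + 1) x) = proj i x)
    (hcubes : ∀ (k : ℕ) (c : (Fin k → Bool) → L),
      c ∈ SL.cubes k ↔ ∀ i, (fun ω => proj i (c ω)) ∈ (S i).cubes k)
    (hsep : ∀ x y : L, (∀ i, proj i x = proj i y) → x = y)
    (hlim : ∀ x : ∀ i, X i, (∀ i, p i (x (i + 1)) = x i) → ∃ l : L, ∀ i, proj i l = x i) :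
    IsFibration SL (S 0) (proj 0) ∧
      ∀ s : ℕ, (∀ i, HasUniquenessAt (S (i + 1)) (S i) (p i) (s + 1)) →
        HasUniquenessAt SL (S 0) (proj 0) (s + 1) := by
  constructor
  · refine ⟨⟨hcont 0, fun k c hc => (hcubes k c).1 hc 0⟩, ?_⟩
    intro k lam c hlam hc hagree
    -- the projected corners
    have hcorner : ∀ i, IsCubeCorner (S i) (fun ω => proj i (lam ω)) := by
      intro i j
      exact (hcubes k _).1 (hlam j) i
    have hstep : ∀ (i : ℕ) (ci : (Fin k → Bool) → X i), ci ∈ (S i).cubes k →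
        (∀ ω, ω ≠ topVtx k → ci ω = proj i (lam ω)) →
        ∃ ci' : (Fin k → Bool) → X (i + 1), ci' ∈ (S (i + 1)).cubes k ∧
          (∀ ω, ω ≠ topVtx k → ci' ω = proj (i + 1) (lam ω)) ∧
          (fun ω => p i (ci' ω)) = ci := by
      intro i ci hci hcagree
      obtain ⟨c', hc', hagr, hproj⟩ := (hp i).2 k (fun ω => proj (i + 1) (lam ω)) ci
        (hcorner (i + 1)) hci
        (fun ω hω => by rw [hcompat]; exact (hcagree ω hω).symm)
      exact ⟨c', hc', hagr, hproj⟩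
    -- build the compatible sequence of cubes
    let T : ℕ → Type _ := fun i =>
      {ci : (Fin k → Bool) → X i // ci ∈ (S i).cubes k ∧
        ∀ ω, ω ≠ topVtx k → ci ω = proj i (lam ω)}
    let step : ∀ i, T i → T (i + 1) := fun i ci =>
      ⟨(hstep i ci.1 ci.2.1 ci.2.2).choose, (hstep i ci.1 ci.2.1 ci.2.2).choose_spec.1,
       (hstep i ci.1 ci.2.1 ci.2.2).choose_spec.2.1⟩
    let seq : ∀ i, T i := fun i =>
      Nat.rec (⟨c, hc, fun ω hω => (hagree ω hω).symm⟩ : T 0) step i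
    have hcompatseq : ∀ i, (fun ω => p i ((seq (i + 1)).1 ω)) = (seq i).1 := by
      intro i
      exact (hstep i (seq i).1 (seq i).2.1 (seq i).2.2).choose_spec.2.2
    -- pass to the limit pointwise
    have hpt : ∀ ω : Fin k → Bool, ∃ l : L, ∀ i, proj i l = (seq i).1 ω := by
      intro ω
      exact hlim (fun i => (seq i).1 ω) (fun i => congrFun (hcompatseq i) ω)
    choose c₀ hc₀ using hpt
    have hproj : ∀ i, (fun ω => proj i (c₀ ω)) = (seq i).1 := by
      intro i; funext ω; exact hc₀ ω i
    refine ⟨c₀, ?_, ?_, ?_⟩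
    · exact (hcubes k c₀).2 (fun i => by rw [hproj i]; exact (seq i).2.1)
    · intro ω hω
      apply hsep
      intro i
      rw [hc₀ ω i]
      exact (seq i).2.2 ω hω
    · exact hproj 0
  · intro s hu c hcc c' hcc' hagr hpr
    have key : ∀ i, (fun ω => proj i (c ω)) = (fun ω => proj i (c' ω)) := by
      intro i
      induction i with
      | zero => exact hpr
      | succ i ih =>
        refine hu i _ ((hcubes _ c).1 hcc (i + 1)) _ ((hcubes _ c').1 hcc' (i + 1))
          (fun ω hω => by rw [hagr ω hω]) ?_
        funext ω
        simp only [hcompat]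
        exact congrFun ih ω
    funext ω
    exact hsep _ _ (fun i => congrFun (key i) ω)
end

section
/- Every fiber of an s-fibration is an s-nilspace: if f : X → Y is a fibration with (s+1)-uniqueness, then for each y ∈ Y the subcubespace f⁻¹(y) (with cubes C^k(f⁻¹(y)) = C^k(X) ∩ (f⁻¹(y))^{{0,1}^k}) is fibrant and has (s+1)-uniqueness. -/
open Function Set

/-- The subcubespace on a subset `A ⊆ X`: cubes of `X` taking values in `A`. -/
def subFamily {X : Type*} (S : CubeFamily X) (A : Set X) : CubeFamily X :=
  ⟨fun k => {c | c ∈ S.cubes k ∧ ∀ ω, c ω ∈ A}⟩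

/-- every fiber of an `s`-fibration is an `s`-nilspace: if `f : X → Y` is
a fibration with `(s+1)`-uniqueness, then for each `y ∈ Y` (with nonempty fiber) the
subcubespace `f⁻¹(y)`, whose `k`-cubes are `C^k(X) ∩ (f⁻¹(y))^{{0,1}^k}`, is fibrant
and has `(s+1)`-uniqueness. -/
theorem fiber_is_nilspace {X Y : Type*} [MetricSpace X] [MetricSpace Y]
    [CompactSpace X] [CompactSpace Y]
    (S : CubeFamily X) (T : CubeFamily Y) (hS : S.IsCubespace) (hT : T.IsCubespace)
    (heS : IsErgodic S) (heT : IsErgodic T) (hgS : IsGluing S) (hgT : IsGluing T)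
    (f : X → Y) (s : ℕ) (hf : IsSFibration S T f s)
    (y : Y) (hy : ∃ x, f x = y) :
    IsFibrant (subFamily S {x | f x = y}) ∧ HasUnique (subFamily S {x | f x = y}) (s + 1) := by
  have hconst : ∀ k : ℕ, (fun _ : Fin k → Bool => y) ∈ T.cubes k := by
    intro k
    have h0 : (fun _ : Fin 0 → Bool => y) ∈ T.cubes 0 := by
      rw [hT.2.1]; trivial
    have hρ : IsDiscreteCubeMorphism (fun _ : Fin k → Bool => (default : Fin 0 → Bool)) := by
      intro j; exact j.elim0
    exact hT.2.2 _ hρ _ h0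
  constructor
  · intro k lam hlam
    have hcornS : IsCubeCorner S lam := fun i => (hlam i).1
    have hfib : ∀ ω, ω ≠ topVtx k → f (lam ω) = y := by
      intro ω hω
      have : ∃ i : Fin k, ω i = false := by
        by_contra h
        push_neg at h
        exact hω (funext fun i => by simpa [topVtx] using h i)
      obtain ⟨i, hi⟩ := this
      have hup : Function.update ω i false = ω := by
        funext j
        by_cases hj : j = i
        · subst hj; simp [Function.update, hi]
        · simp [Function.update, hj]
      simpa [hup] using (hlam i).2 ω
    obtain ⟨c₀, hc₀, hagree, hover⟩ :=
      hf.1.2 k lam (fun _ => y) hcornS (hconst k) hfib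
    refine ⟨c₀, ⟨hc₀, fun ω => ?_⟩, hagree⟩
    exact congrFun hover ω
  · intro c hc c' hc' hagree
    refine hf.2 c hc.1 c' hc'.1 hagree ?_
    funext ω
    rw [hc.2 ω, hc'.2 ω]
end

section
/- For a compact gluing cubespace X and any s ≥ 0, the quotient X/∼_s by the s-th canonical relation has (s+1)-uniqueness. Consequently, if X is a compact fibrant cubespace then X/∼_s is an s-nilspace. -/
open Function Set

/-- The quotient cubespace `X/∼ₛ`: cubes are images of cubes of `X` under the quotient map. -/
def quotFamilyAbs {X : Type*} (S : CubeFamily X) (s : ℕ) :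
    CubeFamily (Quot (CanonRel S s)) :=
  ⟨fun k => {d | ∃ c ∈ S.cubes k, d = fun ω => Quot.mk _ (c ω)}⟩


/-!
In a gluing cubespace, whether the top vertex of a cube `c` can be moved to a point `y` depends
only on `c 1⃗`: gluing `[c₀, c₁]` with `[c₁, c₁[1⃗ ↦ y]]` reduces the question for `[c₀, c₁]` to
the degenerate cube `[c₁, c₁]`, and an induction on the number of non-degenerate coordinates
settles it. In dimension at most `s + 1` this is universal replacement, so `∼ₛ` is an equivalence
relation, and two `(s+1)`-cubes agreeing modulo `∼ₛ` off `1⃗` have `∼ₛ`-related tops: this is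
`(s+1)`-uniqueness of `X/∼ₛ`.

For fibrancy, the quotient map has relative completion in every dimension: by replacement up to
dimension `s + 1`, and above it by completing in `X` and using uniqueness in the quotient. A corner
of `X/∼ₛ` then lifts to a corner of `X`, built on the subcubes `{ω ≤ g}` in order of increasing
dimension with one relative completion for each `g`; completing the lift in `X` and projecting
completes the corner.
-/

def CubeFamily.IsMorphismClosed {X : Type*} (S : CubeFamily X) : Prop :=
  ∀ {k l : ℕ} (ρ : (Fin k → Bool) → (Fin l → Bool)), IsDiscreteCubeMorphism ρ →
    ∀ c ∈ S.cubes l, (fun ω => c (ρ ω)) ∈ S.cubes k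

section DiscreteCube

variable {k m : ℕ}

theorem isDiscreteCubeMorphism_comp_right (τ : Fin m → Fin k) :
    IsDiscreteCubeMorphism (fun ω : Fin k → Bool => ω ∘ τ) :=
  fun j => Or.inr <| Or.inr <| Or.inl ⟨τ j, fun _ => rfl⟩

theorem isDiscreteCubeMorphism_to_fin_zero (ρ : (Fin k → Bool) → (Fin 0 → Bool)) :
    IsDiscreteCubeMorphism ρ :=
  fun j => j.elim0

theorem isDiscreteCubeMorphism_inf (g : Fin k → Bool) :
    IsDiscreteCubeMorphism (· ⊓ g) := by
  intro i
  cases h : g i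
  · exact Or.inl fun ω => by simp [h]
  · exact Or.inr <| Or.inr <| Or.inl ⟨i, fun ω => by simp [h]⟩

theorem isDiscreteCubeMorphism_snoc (b : Bool) :
    IsDiscreteCubeMorphism (fun ω : Fin k → Bool => (Fin.snoc ω b : Fin (k + 1) → Bool)) := by
  intro j
  induction j using Fin.lastCases with
  | last => cases b <;> simp
  | cast i => exact Or.inr <| Or.inr <| Or.inl ⟨i, fun ω => by simp⟩

def reflectTo (ω₀ ω : Fin k → Bool) : Fin k → Bool := fun i => if ω₀ i then ω i else !ω i

theorem isDiscreteCubeMorphism_reflectTo (ω₀ : Fin k → Bool) :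
    IsDiscreteCubeMorphism (reflectTo ω₀) := by
  intro i
  cases h : ω₀ i
  · exact Or.inr <| Or.inr <| Or.inr ⟨i, fun ω => by simp [reflectTo, h]⟩
  · exact Or.inr <| Or.inr <| Or.inl ⟨i, fun ω => by simp [reflectTo, h]⟩

theorem reflectTo_involutive (ω₀ : Fin k → Bool) : Involutive (reflectTo ω₀) := by
  intro ω; funext i; cases h : ω₀ i <;> simp [reflectTo, h]

theorem reflectTo_self (ω₀ : Fin k → Bool) : reflectTo ω₀ ω₀ = topVtx k := by
  funext i; cases h : ω₀ i <;> simp [reflectTo, topVtx, h]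

def padTrue (k m : ℕ) (ω : Fin k → Bool) : Fin m → Bool :=
  fun j => if h : (j : ℕ) < k then ω ⟨j, h⟩ else true

theorem isDiscreteCubeMorphism_padTrue : IsDiscreteCubeMorphism (padTrue k m) := by
  intro j
  by_cases h : (j : ℕ) < k
  · exact Or.inr <| Or.inr <| Or.inl ⟨⟨j, h⟩, fun ω => by simp [padTrue, h]⟩
  · exact Or.inr <| Or.inl fun ω => by simp [padTrue, h]

theorem padTrue_topVtx : padTrue k m (topVtx k) = topVtx m := by
  funext j; simp [padTrue, topVtx]

theorem padTrue_eq_topVtx_iff (h : k ≤ m) {ω : Fin k → Bool} :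
    padTrue k m ω = topVtx m ↔ ω = topVtx k := by
  refine ⟨fun hω => funext fun i => ?_, fun hω => hω ▸ padTrue_topVtx⟩
  simpa [padTrue, topVtx] using congrFun hω ⟨i, by omega⟩

end DiscreteCube

section Concat

variable {α : Type*} {k : ℕ}

theorem concatCube_snoc (c₀ c₁ : (Fin k → Bool) → α) (ω : Fin k → Bool) (b : Bool) :
    concatCube c₀ c₁ (Fin.snoc ω b) = if b then c₁ ω else c₀ ω := by
  cases b <;> simp [concatCube]

theorem concatCube_topVtx (c₀ c₁ : (Fin k → Bool) → α) :
    concatCube c₀ c₁ (topVtx (k + 1)) = c₁ (topVtx k) :=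
  if_pos rfl

theorem snoc_eq_topVtx_iff {ω : Fin k → Bool} {b : Bool} :
    (Fin.snoc ω b : Fin (k + 1) → Bool) = topVtx (k + 1) ↔ ω = topVtx k ∧ b = true := by
  have : topVtx (k + 1) = Fin.snoc (topVtx k) true := by
    funext j; induction j using Fin.lastCases <;> simp [topVtx]
  rw [this, Fin.snoc_inj]

theorem eq_concatCube (c : (Fin (k + 1) → Bool) → α) :
    c = concatCube (fun ω => c (Fin.snoc ω false)) (fun ω => c (Fin.snoc ω true)) := by
  funext ω
  rw [← Fin.snoc_init_self ω, concatCube_snoc]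
  cases ω (Fin.last k) <;> rfl

theorem update_concatCube_topVtx (c₀ c₁ : (Fin k → Bool) → α) (y : α) :
    update (concatCube c₀ c₁) (topVtx (k + 1)) y = concatCube c₀ (update c₁ (topVtx k) y) := by
  funext ω
  rw [← Fin.snoc_init_self ω]
  cases ω (Fin.last k) <;> simp [concatCube_snoc, update_apply, snoc_eq_topVtx_iff]

theorem update_topVtx_comp_perm {m : ℕ} (σ : Equiv.Perm (Fin m)) (F : (Fin m → Bool) → α)
    (y : α) :
    (fun ω => update F (topVtx m) y (ω ∘ σ)) = update (fun ω => F (ω ∘ σ)) (topVtx m) y := by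
  funext ω
  by_cases hω : ω = topVtx m
  · subst hω; rfl
  · have : ω ∘ σ ≠ topVtx m := fun h => hω <| funext fun i => by
      simpa [topVtx] using congrFun h (σ.symm i)
    simp [hω, this]

theorem concatCube_comp_castLE_swap {m : ℕ} (h : k + 1 ≤ m + 1) (c₀ c₁ : (Fin k → Bool) → α) :
    (fun ω => concatCube c₀ c₁ ((ω ∘ Equiv.swap ⟨k, by omega⟩ (Fin.last m)) ∘ Fin.castLE h)) =
      concatCube (fun ω => c₀ (ω ∘ Fin.castLE (by omega))) (fun ω => c₁ (ω ∘ Fin.castLE (by omega))) := by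
  have hlast : Fin.castLE h (Fin.last k) = ⟨k, by omega⟩ := rfl
  have hcast (i : Fin k) : Equiv.swap ⟨k, by omega⟩ (Fin.last m) (Fin.castLE h i.castSucc) =
      (Fin.castLE (by omega) i : Fin m).castSucc := by
    rw [Equiv.swap_apply_of_ne_of_ne] <;> simp [Fin.ext_iff] <;> omega
  funext ω
  simp only [concatCube, comp_apply, hlast, Equiv.swap_apply_left, hcast]
  rfl

theorem concatCube_comp_castLE_self {m : ℕ} (h : k ≤ m) (c : (Fin k → Bool) → α) :
    concatCube (fun ω => c (ω ∘ Fin.castLE h)) (fun ω => c (ω ∘ Fin.castLE h)) =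
      fun ω => c (ω ∘ Fin.castLE (h.trans m.le_succ)) := by
  funext ω
  simp [concatCube]
  rfl

end Concat

namespace CubeFamily.IsMorphismClosed

variable {X : Type*} {S : CubeFamily X} (hS : S.IsMorphismClosed) {k : ℕ}
include hS

theorem const_mem (h0 : S.cubes 0 = univ) (x : X) : (fun _ : Fin k → Bool => x) ∈ S.cubes k :=
  hS (fun _ => Fin.elim0) (isDiscreteCubeMorphism_to_fin_zero _) (fun _ => x) (h0 ▸ trivial)

theorem comp_mem {m : ℕ} (τ : Fin m → Fin k) {c : (Fin m → Bool) → X} (hc : c ∈ S.cubes m) :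
    (fun ω => c (ω ∘ τ)) ∈ S.cubes k :=
  hS _ (isDiscreteCubeMorphism_comp_right τ) c hc

theorem left_mem_of_concatCube_mem {c₀ c₁ : (Fin k → Bool) → X}
    (h : concatCube c₀ c₁ ∈ S.cubes (k + 1)) : c₀ ∈ S.cubes k := by
  simpa [concatCube_snoc] using hS _ (isDiscreteCubeMorphism_snoc false) _ h

theorem right_mem_of_concatCube_mem {c₀ c₁ : (Fin k → Bool) → X}
    (h : concatCube c₀ c₁ ∈ S.cubes (k + 1)) : c₁ ∈ S.cubes k := by
  simpa [concatCube_snoc] using hS _ (isDiscreteCubeMorphism_snoc true) _ h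

theorem concatCube_swap_mem {c₀ c₁ : (Fin k → Bool) → X}
    (h : concatCube c₀ c₁ ∈ S.cubes (k + 1)) : concatCube c₁ c₀ ∈ S.cubes (k + 1) := by
  convert hS _ (isDiscreteCubeMorphism_reflectTo (Fin.snoc (topVtx k) false)) _ h using 1
  funext ω
  rw [← Fin.snoc_init_self ω]
  cases ω (Fin.last k) <;> simp [concatCube, reflectTo, topVtx, Fin.init]

end CubeFamily.IsMorphismClosed

section Gluing

variable {X : Type*} {S : CubeFamily X}

theorem IsGluing.concatCube_trans (hglue : IsGluing S) (hS : S.IsMorphismClosed) {k : ℕ}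
    {c₀ c₁ c₂ : (Fin k → Bool) → X} (h₀₁ : concatCube c₀ c₁ ∈ S.cubes (k + 1))
    (h₁₂ : concatCube c₁ c₂ ∈ S.cubes (k + 1)) : concatCube c₀ c₂ ∈ S.cubes (k + 1) :=
  hglue k c₀ c₁ c₂ (hS.left_mem_of_concatCube_mem h₀₁) (hS.left_mem_of_concatCube_mem h₁₂)
    (hS.right_mem_of_concatCube_mem h₁₂) h₀₁ h₁₂

/-- Pulling back along `{0,1}^m → {0,1}^k` is what lets the induction on `k` run: gluing
reduces the claim for `[c₀, c₁]` to the claim for the degenerate cube `[c₁, c₁]`. -/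
theorem update_topVtx_comp_castLE_mem (hglue : IsGluing S) (hS : S.IsMorphismClosed) :
    ∀ {k m : ℕ} (h : k ≤ m) {a c : (Fin k → Bool) → X}, a ∈ S.cubes k → c ∈ S.cubes k →
      a (topVtx k) = c (topVtx k) → ∀ y,
      update (fun ω => a (ω ∘ Fin.castLE h)) (topVtx m) y ∈ S.cubes m →
      update (fun ω => c (ω ∘ Fin.castLE h)) (topVtx m) y ∈ S.cubes m := by
  intro k
  induction k with
  | zero =>
    intro m h a c _ _ hac y ha
    have : a = c := funext fun ω => by rwa [Subsingleton.elim ω (topVtx 0)]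
    rwa [← this]
  | succ k ih =>
    intro m h a c ha hc hac y hay
    obtain ⟨m, rfl⟩ : ∃ m', m = m' + 1 := ⟨m - 1, by omega⟩
    obtain ⟨a₀, a₁, rfl⟩ : ∃ a₀ a₁, a = concatCube a₀ a₁ := ⟨_, _, eq_concatCube a⟩
    obtain ⟨c₀, c₁, rfl⟩ : ∃ c₀ c₁, c = concatCube c₀ c₁ := ⟨_, _, eq_concatCube c⟩
    have hkm : k ≤ m := by omega
    -- `σ` brings the last coordinate of `a` and `c` to the last position, where gluing acts
    set σ := Equiv.swap (⟨k, by omega⟩ : Fin (m + 1)) (Fin.last m)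
    have hσσ : ⇑σ ∘ ⇑σ = id := funext fun i => Equiv.swap_apply_self _ _ i
    have ha_split := concatCube_comp_castLE_swap h a₀ a₁ ▸ hS.comp_mem σ (hS.comp_mem _ ha)
    have ha_moved : concatCube (fun ω => a₀ (ω ∘ Fin.castLE hkm))
        (update (fun ω => a₁ (ω ∘ Fin.castLE hkm)) (topVtx m) y) ∈ S.cubes (m + 1) := by
      rw [← update_concatCube_topVtx, ← concatCube_comp_castLE_swap h,
        ← update_topVtx_comp_perm σ fun ω => concatCube a₀ a₁ (ω ∘ Fin.castLE h)]
      exact hS.comp_mem σ hay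
    have hc₁_moved := ih (hkm.trans m.le_succ) (hS.right_mem_of_concatCube_mem ha)
      (hS.right_mem_of_concatCube_mem hc) (by simpa only [concatCube_topVtx] using hac) y (by
        rw [← concatCube_comp_castLE_self hkm, update_concatCube_topVtx]
        exact hglue.concatCube_trans hS (hS.concatCube_swap_mem ha_split) ha_moved)
    rw [← concatCube_comp_castLE_self hkm, update_concatCube_topVtx] at hc₁_moved
    have hc_moved := hglue.concatCube_trans hS
      (concatCube_comp_castLE_swap h c₀ c₁ ▸ hS.comp_mem σ (hS.comp_mem _ hc)) hc₁_moved
    rw [← update_concatCube_topVtx, ← concatCube_comp_castLE_swap h,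
      ← update_topVtx_comp_perm σ fun ω => concatCube c₀ c₁ (ω ∘ Fin.castLE h)] at hc_moved
    simpa only [comp_assoc, hσσ, comp_id] using hS.comp_mem σ hc_moved

end Gluing

section CanonRel

variable {X : Type*} {S : CubeFamily X} {s k : ℕ}

theorem update_topVtx_mem_of_canonRel (hglue : IsGluing S) (hS : S.IsMorphismClosed)
    (hk : k ≤ s + 1) {c : (Fin k → Bool) → X} (hc : c ∈ S.cubes k) {y : X}
    (hy : CanonRel S s (c (topVtx k)) y) : update c (topVtx k) y ∈ S.cubes k := by
  obtain ⟨q, hq, q', hq', hqq', hqx, hq'y⟩ := hy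
  have hpad : update (fun ω => q (padTrue k (s + 1) ω)) (topVtx k) y =
      fun ω => q' (padTrue k (s + 1) ω) := by
    funext ω
    by_cases hω : ω = topVtx k
    · simp [hω, padTrue_topVtx, hq'y]
    · simp [hω, hqq' _ (mt (padTrue_eq_topVtx_iff hk).1 hω)]
  have := update_topVtx_comp_castLE_mem hglue hS le_rfl
    (hS _ isDiscreteCubeMorphism_padTrue q hq) hc (by simp [padTrue_topVtx, hqx]) y
    (by simpa [hpad] using hS _ isDiscreteCubeMorphism_padTrue q' hq')
  simpa using this

theorem update_mem_of_canonRel (hglue : IsGluing S) (hS : S.IsMorphismClosed)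
    (hk : k ≤ s + 1) {c : (Fin k → Bool) → X} (hc : c ∈ S.cubes k) (ω₀ : Fin k → Bool) {y : X}
    (hy : CanonRel S s (c ω₀) y) : update c ω₀ y ∈ S.cubes k := by
  have hr : reflectTo ω₀ (topVtx k) = ω₀ := by
    rw [← reflectTo_self ω₀, reflectTo_involutive]
  have := hS _ (isDiscreteCubeMorphism_reflectTo ω₀) _ (update_topVtx_mem_of_canonRel hglue hS hk
    (hS _ (isDiscreteCubeMorphism_reflectTo ω₀) c hc) (y := y) (by rwa [hr]))
  rw [← reflectTo_self ω₀] at this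
  convert this using 1
  rw [← comp_def, update_comp_eq_of_injective _ (reflectTo_involutive ω₀).injective]
  simp [comp_def, reflectTo_involutive ω₀ _]

theorem mem_of_forall_canonRel (hglue : IsGluing S) (hS : S.IsMorphismClosed)
    (hk : k ≤ s + 1) {c c' : (Fin k → Bool) → X} (hc : c ∈ S.cubes k)
    (h : ∀ ω, CanonRel S s (c ω) (c' ω)) : c' ∈ S.cubes k := by
  classical
  have key (t : Finset (Fin k → Bool)) : (fun ω => if ω ∈ t then c' ω else c ω) ∈ S.cubes k := by
    induction t using Finset.induction_on with
    | empty => simpa using hc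
    | insert ω₀ t hω₀ ih =>
      convert update_mem_of_canonRel hglue hS hk ih ω₀ (by simpa [hω₀] using h ω₀) using 1
      funext ω
      by_cases hω : ω = ω₀ <;> simp [hω]
  simpa using key Finset.univ

theorem CanonRel.symm {x y : X} : CanonRel S s x y → CanonRel S s y x :=
  fun ⟨c, hc, c', hc', hcc', hx, hy⟩ => ⟨c', hc', c, hc, fun ω hω => (hcc' ω hω).symm, hy, hx⟩

theorem canonRel_equivalence (hglue : IsGluing S) (hS : S.IsMorphismClosed)
    (h0 : S.cubes 0 = univ) (s : ℕ) : Equivalence (CanonRel S s) where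
  refl x := ⟨_, hS.const_mem h0 x, _, hS.const_mem h0 x, fun _ _ => rfl, rfl, rfl⟩
  symm := CanonRel.symm
  trans := by
    rintro x y z hxy ⟨d, hd, d', hd', hdd', rfl, rfl⟩
    exact ⟨_, update_topVtx_mem_of_canonRel hglue hS le_rfl hd hxy.symm, d', hd',
      fun ω hω => by simp [hω, hdd' ω hω], by simp, rfl⟩

theorem quot_mk_eq_iff_canonRel (hglue : IsGluing S) (hS : S.IsMorphismClosed)
    (h0 : S.cubes 0 = univ) {x y : X} :
    Quot.mk (CanonRel S s) x = Quot.mk (CanonRel S s) y ↔ CanonRel S s x y :=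
  Quot.eq.trans (canonRel_equivalence hglue hS h0 s).eqvGen_iff

end CanonRel

theorem CubeFamily.IsMorphismClosed.quotFamilyAbs {X : Type*} {S : CubeFamily X}
    (hS : S.IsMorphismClosed) (s : ℕ) : (quotFamilyAbs S s).IsMorphismClosed := by
  rintro k l ρ hρ _ ⟨c, hc, rfl⟩
  exact ⟨_, hS ρ hρ c hc, rfl⟩

theorem HasUnique.mono {X : Type*} {S : CubeFamily X} (hS : S.IsMorphismClosed) {k m : ℕ}
    (hk : HasUnique S k) (hkm : k ≤ m) : HasUnique S m := by
  intro c hc c' hc' hcc'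
  funext ω
  by_cases hω : ω = topVtx m
  · have := hk _ (hS _ isDiscreteCubeMorphism_padTrue c hc) _
      (hS _ isDiscreteCubeMorphism_padTrue c' hc')
      (fun ω hω => hcc' _ (mt (padTrue_eq_topVtx_iff hkm).1 hω))
    simpa [hω, padTrue_topVtx] using congrFun this (topVtx k)
  · exact hcc' ω hω

theorem hasUnique_quotFamilyAbs {X : Type*} {S : CubeFamily X} (hglue : IsGluing S)
    (hS : S.IsMorphismClosed) (h0 : S.cubes 0 = univ) (s : ℕ) :
    HasUnique (quotFamilyAbs S s) (s + 1) := by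
  rintro _ ⟨c, hc, rfl⟩ _ ⟨c', hc', rfl⟩ hcc'
  have hrel (ω) (hω : ω ≠ topVtx (s + 1)) : CanonRel S s (c ω) (c' ω) :=
    (quot_mk_eq_iff_canonRel hglue hS h0).1 (hcc' ω hω)
  -- `c` with its top value moved to that of `c'` is a cube, witnessing `c 1⃗ ∼ₛ c' 1⃗`
  have hmoved : update c (topVtx (s + 1)) (c' (topVtx (s + 1))) ∈ S.cubes (s + 1) := by
    refine mem_of_forall_canonRel hglue hS le_rfl hc' fun ω => ?_
    by_cases hω : ω = topVtx (s + 1)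
    · simpa [hω] using (canonRel_equivalence hglue hS h0 s).refl _
    · simpa [hω] using (hrel ω hω).symm
  funext ω
  by_cases hω : ω = topVtx (s + 1)
  · subst hω
    exact Quot.sound ⟨c, hc, _, hmoved, fun ω hω => by simp [hω], rfl, by simp⟩
  · exact hcc' ω hω

theorem hasCompletionAt_quot_mk {X : Type*} {S : CubeFamily X} {s : ℕ} (hglue : IsGluing S)
    (hS : S.IsMorphismClosed) (h0 : S.cubes 0 = univ) (hfib : IsFibrant S) (m : ℕ) :
    HasCompletionAt S (quotFamilyAbs S s) (Quot.mk _) m := by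
  rintro μ _ hμ ⟨e, he, rfl⟩ hμe
  rcases le_or_gt m (s + 1) with hm | hm
  · -- in low dimension, any configuration pointwise equivalent to a cube is a cube
    have hrel (ω) : CanonRel S s (e ω) (update μ (topVtx m) (e (topVtx m)) ω) := by
      by_cases hω : ω = topVtx m
      · simpa [hω] using (canonRel_equivalence hglue hS h0 s).refl _
      · simpa [hω] using ((quot_mk_eq_iff_canonRel hglue hS h0).1 (hμe ω hω)).symm
    refine ⟨_, mem_of_forall_canonRel hglue hS hm he hrel, fun ω hω => by simp [hω],
      funext fun ω => (Quot.sound (hrel ω)).symm⟩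
  · obtain ⟨c₀, hc₀, hc₀μ⟩ := hfib m μ hμ
    refine ⟨c₀, hc₀, hc₀μ, ?_⟩
    exact ((hasUnique_quotFamilyAbs hglue hS h0 s).mono (hS.quotFamilyAbs s) hm.le) _
      ⟨c₀, hc₀, rfl⟩ _ ⟨e, he, rfl⟩ fun ω hω => by simp [hc₀μ ω hω, hμe ω hω]

section Subcube

variable {k : ℕ} (g : Fin k → Bool)

noncomputable def subcubeEquiv : Fin (Fintype.card {i // g i = true}) ≃ {i // g i = true} :=
  (Fintype.equivFin _).symm

noncomputable def subcubeProj (ω : Fin k → Bool) : Fin (Fintype.card {i // g i = true}) → Bool :=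
  fun j => ω (subcubeEquiv g j)

/-- The subcube `{ω | ω ≤ g}` of `{0,1}^k`, parametrized by `{0,1}^{|g|}`. -/
noncomputable def subcubeIncl (η : Fin (Fintype.card {i // g i = true}) → Bool) : Fin k → Bool :=
  fun i => if h : g i = true then η ((subcubeEquiv g).symm ⟨i, h⟩) else false

theorem isDiscreteCubeMorphism_subcubeIncl : IsDiscreteCubeMorphism (subcubeIncl g) := by
  intro i
  by_cases h : g i = true
  · exact Or.inr <| Or.inr <| Or.inl ⟨(subcubeEquiv g).symm ⟨i, h⟩, fun η => by
      simp [subcubeIncl, h]⟩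
  · exact Or.inl fun η => by simp [subcubeIncl, h]

theorem isDiscreteCubeMorphism_subcubeProj : IsDiscreteCubeMorphism (subcubeProj g) :=
  isDiscreteCubeMorphism_comp_right (Subtype.val ∘ subcubeEquiv g)

theorem subcubeIncl_subcubeProj (ω : Fin k → Bool) : subcubeIncl g (subcubeProj g ω) = ω ⊓ g := by
  funext i
  by_cases h : g i = true <;> simp [subcubeIncl, subcubeProj, h]

theorem subcubeProj_subcubeIncl (η : Fin (Fintype.card {i // g i = true}) → Bool) :
    subcubeProj g (subcubeIncl g η) = η := by
  funext j
  simp [subcubeIncl, subcubeProj, (subcubeEquiv g j).2]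

theorem subcubeProj_self : subcubeProj g g = topVtx (Fintype.card {i // g i = true}) :=
  funext fun j => (subcubeEquiv g j).2

theorem subcubeIncl_topVtx : subcubeIncl g (topVtx _) = g := by
  funext i
  by_cases h : g i = true <;> simp [subcubeIncl, topVtx, h]

theorem subcubeIncl_le (η : Fin (Fintype.card {i // g i = true}) → Bool) : subcubeIncl g η ≤ g :=
  inf_eq_left.1 <| by rw [← subcubeIncl_subcubeProj, subcubeProj_subcubeIncl]

theorem subcubeIncl_eq_self_iff {η : Fin (Fintype.card {i // g i = true}) → Bool} :
    subcubeIncl g η = g ↔ η = topVtx _ := by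
  refine ⟨fun h => ?_, fun h => h ▸ subcubeIncl_topVtx g⟩
  rw [← subcubeProj_subcubeIncl g η, h, subcubeProj_self]

theorem subcubeProj_eq_topVtx_iff {ω : Fin k → Bool} : subcubeProj g ω = topVtx _ ↔ ω ⊓ g = g := by
  rw [← subcubeIncl_eq_self_iff, subcubeIncl_subcubeProj]

theorem subcubeIncl_update (η : Fin (Fintype.card {i // g i = true}) → Bool)
    (j : Fin (Fintype.card {i // g i = true})) :
    subcubeIncl g (update η j false) = subcubeIncl g η ⊓ update g (subcubeEquiv g j) false := by
  funext i
  by_cases h : g i = true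
  · by_cases hij : i = subcubeEquiv g j
    · subst hij; simp [subcubeIncl]
    · have : (subcubeEquiv g).symm ⟨i, h⟩ ≠ j := fun hj => hij (by simp [← hj])
      simp [subcubeIncl, h, hij, this]
  · simp [subcubeIncl, h]

end Subcube

section Weight

variable {k : ℕ}

def weight (g : Fin k → Bool) : ℕ := (Finset.univ.filter fun i => g i = true).card

theorem weight_strictMono : StrictMono (weight (k := k)) := by
  intro v g h
  obtain ⟨hle, i, hi⟩ := Pi.lt_def.1 h
  apply Finset.card_lt_card
  refine Finset.ssubset_iff_of_subset (fun j => ?_) |>.2 ⟨i, ?_⟩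
  · have := hle j
    simp only [Finset.mem_filter, Finset.mem_univ, true_and]
    revert this; cases v j <;> cases g j <;> simp
  · simp only [Finset.mem_filter, Finset.mem_univ, true_and]
    revert hi; cases v i <;> cases g i <;> simp

theorem weight_le (g : Fin k → Bool) : weight g ≤ k :=
  (Finset.card_filter_le _ _).trans_eq (Finset.card_fin k)

end Weight

section Lifting

variable {X Y : Type*} {S : CubeFamily X} {T : CubeFamily Y} {f : X → Y} {k : ℕ}

theorem IsCubeCorner.comp_inf_mem (hT : T.IsMorphismClosed) {lam : (Fin k → Bool) → Y}
    (hlam : IsCubeCorner T lam) {g : Fin k → Bool} (hg : g ≠ topVtx k) :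
    (fun ω => lam (ω ⊓ g)) ∈ T.cubes k := by
  obtain ⟨j, hj⟩ : ∃ j, g j = false := by
    by_contra! h
    exact hg (funext fun i => by simpa [topVtx] using h i)
  convert hT _ (isDiscreteCubeMorphism_inf g) _ (hlam j) using 3 with ω
  rw [eq_comm, update_eq_self_iff]
  simp [hj]

theorem exists_lift_below (hS : S.IsMorphismClosed) (hT : T.IsMorphismClosed)
    (hcompl : ∀ m, HasCompletionAt S T f m) {lam' : (Fin k → Bool) → Y}
    (hlam' : IsCubeCorner T lam') {g : Fin k → Bool} (hg : g ≠ topVtx k)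
    {lam : (Fin k → Bool) → X}
    (hlam : ∀ v < g, (fun ω => lam (ω ⊓ v)) ∈ S.cubes k ∧ f (lam v) = lam' v) :
    ∃ x, (fun ω => update lam g x (ω ⊓ g)) ∈ S.cubes k ∧ f x = lam' g := by
  have hlt {η} (hη : η ≠ topVtx _) : subcubeIncl g η < g :=
    (subcubeIncl_le g η).lt_of_ne (mt (subcubeIncl_eq_self_iff g).1 hη)
  have hcorner : IsCubeCorner S (fun η => lam (subcubeIncl g η)) := by
    intro j
    have hj : update g (subcubeEquiv g j) false < g :=
      (update_le_self_iff.2 (Bool.false_le _)).lt_of_ne fun h => by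
        simpa [(subcubeEquiv g j).2] using congrFun h (subcubeEquiv g j)
    simpa [subcubeIncl_update] using
      hS _ (isDiscreteCubeMorphism_subcubeIncl g) _ (hlam _ hj).1
  have hd : (fun η => lam' (subcubeIncl g η)) ∈ T.cubes _ := by
    simpa [inf_eq_left.2 (subcubeIncl_le g _)] using
      hT _ (isDiscreteCubeMorphism_subcubeIncl g) _ (hlam'.comp_inf_mem hT hg)
  obtain ⟨c, hc, hclam, hfc⟩ := hcompl _ _ _ hcorner hd fun η hη => (hlam _ (hlt hη)).2
  refine ⟨c (topVtx _), ?_, by simpa [subcubeIncl_topVtx] using congrFun hfc (topVtx _)⟩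
  convert hS _ (isDiscreteCubeMorphism_subcubeProj g) c hc using 1
  funext ω
  by_cases hω : ω ⊓ g = g
  · simp [hω, (subcubeProj_eq_topVtx_iff g).2 hω]
  · rw [update_of_ne hω, hclam _ (mt (subcubeProj_eq_topVtx_iff g).1 hω), subcubeIncl_subcubeProj]

theorem IsCubeCorner.exists_lift (hS : S.IsMorphismClosed) (hT : T.IsMorphismClosed)
    (hf : Surjective f) (hcompl : ∀ m, HasCompletionAt S T f m) {lam' : (Fin k → Bool) → Y}
    (hlam' : IsCubeCorner T lam') :
    ∃ lam, IsCubeCorner S lam ∧ ∀ ω, ω ≠ topVtx k → f (lam ω) = lam' ω := by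
  let LiftsBelow (lam : (Fin k → Bool) → X) (g : Fin k → Bool) : Prop :=
    (fun ω => lam (ω ⊓ g)) ∈ S.cubes k ∧ f (lam g) = lam' g
  have liftsBelow_congr {lam₁ lam₂ g} (h : ∀ v ≤ g, lam₁ v = lam₂ v) (h₁ : LiftsBelow lam₁ g) :
      LiftsBelow lam₂ g := by
    have : (fun ω => lam₁ (ω ⊓ g)) = fun ω => lam₂ (ω ⊓ g) := funext fun ω => h _ inf_le_right
    exact ⟨this ▸ h₁.1, h g le_rfl ▸ h₁.2⟩
  have key (n : ℕ) : ∃ lam, ∀ g, g ≠ topVtx k → weight g < n → LiftsBelow lam g := by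
    induction n with
    | zero => exact ⟨fun ω => surjInv hf (lam' ω), fun _ _ h => absurd h (Nat.not_lt_zero _)⟩
    | succ n ih =>
      obtain ⟨lam, hlam⟩ := ih
      have hext (g) (hg : g ≠ topVtx k) (hgn : weight g = n) : ∃ x, LiftsBelow (update lam g x) g := by
        obtain ⟨x, hx, hfx⟩ := exists_lift_below hS hT hcompl hlam' hg fun v hv =>
          hlam v (hv.trans_le le_top).ne (hgn ▸ weight_strictMono hv)
        exact ⟨x, hx, by simpa using hfx⟩
      choose x hx using hext
      let lamNext g := if h : g ≠ topVtx k ∧ weight g = n then x g h.1 h.2 else lam g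
      refine ⟨lamNext, fun g hg hgn => ?_⟩
      rcases Nat.lt_succ_iff_lt_or_eq.1 hgn with hgn | hgn
      · refine liftsBelow_congr (lam₂ := lamNext) (fun v hv => ?_) (hlam g hg hgn)
        simp [lamNext, ((weight_strictMono.monotone hv).trans_lt hgn).ne]
      · refine liftsBelow_congr (lam₂ := lamNext) (fun v hv => ?_) (hx g hg hgn)
        rcases hv.lt_or_eq with hv | rfl
        · simp [lamNext, hv.ne, (hgn ▸ weight_strictMono hv).ne]
        · simp [lamNext, hg, hgn]
  obtain ⟨lam, hlam⟩ := key (k + 1)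
  refine ⟨lam, fun i => ?_, fun ω hω => (hlam ω hω (Nat.lt_succ_of_le (weight_le ω))).2⟩
  have hi : update (topVtx k) i false ≠ topVtx k := fun h => by
    simpa [topVtx] using congrFun h i
  convert (hlam _ hi (Nat.lt_succ_of_le (weight_le _))).1 using 3 with ω
  funext j
  by_cases hj : j = i <;> simp [hj, topVtx]

theorem IsFibrant.of_surjective_of_hasCompletionAt (hfib : IsFibrant S)
    (hS : S.IsMorphismClosed) (hT : T.IsMorphismClosed) (hf : Surjective f)
    (hmap : ∀ k, ∀ c ∈ S.cubes k, (fun ω => f (c ω)) ∈ T.cubes k)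
    (hcompl : ∀ m, HasCompletionAt S T f m) : IsFibrant T := by
  intro k lam' hlam'
  obtain ⟨lam, hlam, hflam⟩ := hlam'.exists_lift hS hT hf hcompl
  obtain ⟨c, hc, hclam⟩ := hfib k lam hlam
  exact ⟨_, hmap k c hc, fun ω hω => by simp [hclam ω hω, hflam ω hω]⟩

end Lifting

theorem quotient_has_uniqueness_general {X : Type*} [MetricSpace X]
    (S : CubeFamily X) (hS : S.IsCubespace) (hglue : IsGluing S) (s : ℕ) :
    HasUnique (quotFamilyAbs S s) (s + 1) ∧
      (IsFibrant S → IsFibrant (quotFamilyAbs S s)) := by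
  have hmor : S.IsMorphismClosed := hS.2.2
  have h0 := hS.2.1
  refine ⟨hasUnique_quotFamilyAbs hglue hmor h0 s, fun hfib => ?_⟩
  exact hfib.of_surjective_of_hasCompletionAt hmor (hmor.quotFamilyAbs s) Quot.mk_surjective
    (fun k c hc => ⟨c, hc, rfl⟩) (hasCompletionAt_quot_mk hglue hmor h0 hfib)

/-- for a compact gluing cubespace `X` and any `s ≥ 0`, the quotient
`X/∼ₛ` by the `s`-th canonical relation has `(s+1)`-uniqueness; consequently if `X` is
moreover fibrant, then `X/∼ₛ` is an `s`-nilspace (fibrant with `(s+1)`-uniqueness). -/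
theorem quotient_has_uniqueness {X : Type*} [MetricSpace X] [CompactSpace X]
    (S : CubeFamily X) (hS : S.IsCubespace) (hglue : IsGluing S) (s : ℕ) :
    HasUnique (quotFamilyAbs S s) (s + 1) ∧
      (IsFibrant S → IsFibrant (quotFamilyAbs S s)) :=
  quotient_has_uniqueness_general S hS hglue s
end

section
/- Let g : Z → Y be an s-fibration between compact ergodic gluing cubespaces. Then for each a in the top structure group A_s(g), the map f_a : Z → Z, f_a(z) = a·z, is an element of Aut_s(g); i.e., A_s(g) embeds into the s-th translation group of g. Consequently A_s(g) commutes with Aut_k(g) for every k ≥ 1. -/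
open Function Set

/-- `F ⊆ {0,1}^n` is a face of codimension `k`: obtained by fixing the values of `k`
coordinates. -/
def IsFaceOfCodim {n : ℕ} (F : Set (Fin n → Bool)) (k : ℕ) : Prop :=
  ∃ (I : Finset (Fin n)) (b : Fin n → Bool), I.card = k ∧ F = {ω | ∀ i ∈ I, ω i = b i}

open Classical in
/-- Modify the configuration `c` by applying `φ` on the face `F`. -/
noncomputable def faceModify {X : Type*} {n : ℕ} (F : Set (Fin n → Bool)) (φ : X → X)
    (c : (Fin n → Bool) → X) : (Fin n → Bool) → X :=
  fun ω => if ω ∈ F then φ (c ω) else c ω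

/-- `φ` is a `k`-translation of the cubespace `S`: a cubespace automorphism such that
modifying any `n`-cube (`n ≥ k`) by `φ` along any codimension-`k` face yields a cube. -/
def IsTranslationOf {X : Type*} (S : CubeFamily X) (φ : X → X) (k : ℕ) : Prop :=
  (∀ (n : ℕ) (c : (Fin n → Bool) → X), c ∈ S.cubes n ↔ (fun ω => φ (c ω)) ∈ S.cubes n) ∧
  ∀ (n : ℕ), k ≤ n → ∀ F : Set (Fin n → Bool), IsFaceOfCodim F k →
    ∀ c ∈ S.cubes n, faceModify F φ c ∈ S.cubes n

/-- `u` belongs to the `k`-th translation group `Aut_k(g)` of a map `g : X → Z`: it is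
a homeomorphism of `X` fixing the fibers of `g` and restricting to a `k`-translation of
each subcubespace `g⁻¹(z)`. -/
def MemAut {X Z : Type*} [TopologicalSpace X] (S : CubeFamily X) (g : X → Z)
    (u : X → X) (k : ℕ) : Prop :=
  IsHomeomorph u ∧ (∀ x, g (u x) = g x) ∧
    ∀ z : Z, IsTranslationOf (subFamily S (g ⁻¹' {z})) u k

/-!
An element `a` of the structure group may be applied to a cube on any codimension-`s` face.
Lifting an `n`-cube to dimension `n + s` and applying `a` successively on the `2 ^ s` parallel
faces cut out by the last `s` coordinates, then restricting back, shows that `a • c` is a cube;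
since `a` preserves the fibres of `g`, it is an `s`-translation of each fibre.

For `u ∈ Aut_k(g)` with `k ≥ 1`, start from the constant `(s + k)`-cube at `z` and apply `a` on a
codimension-`s` face and `u` on a codimension-`k` face, in either order. The two faces meet only
in the top vertex, so the resulting cubes agree off it, and both lie over the constant cube at
`g z`. Relative `(s + 1)`-uniqueness propagates to dimension `s + k`, so the top values
`u (a • z)` and `a • u z` coincide.
-/

lemma isDiscreteCubeMorphism_comp {k l : ℕ} (e : Fin l → Fin k) :
    IsDiscreteCubeMorphism (fun ω : Fin k → Bool => ω ∘ e) :=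
  fun j => Or.inr <| Or.inr <| Or.inl ⟨e j, fun _ => rfl⟩

lemma isDiscreteCubeMorphism_append {m d : ℕ} (b : Fin d → Bool) :
    IsDiscreteCubeMorphism (fun ω : Fin m → Bool => Fin.append ω b) := by
  intro j
  induction j using Fin.addCases with
  | left i => exact Or.inr <| Or.inr <| Or.inl ⟨i, fun ω => Fin.append_left ω b i⟩
  | right i =>
    cases hb : b i
    · exact Or.inl fun ω => (Fin.append_right ω b i).trans hb
    · exact Or.inr <| Or.inl fun ω => (Fin.append_right ω b i).trans hb

lemma isFaceOfCodim_of_embedding {n s : ℕ} (e : Fin s ↪ Fin n) (b : Fin s → Bool) :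
    IsFaceOfCodim {ω : Fin n → Bool | ∀ i, ω (e i) = b i} s := by
  refine ⟨Finset.univ.map e, extend e b fun _ => false, by simp, ?_⟩
  ext ω
  simp [e.injective.extend_apply]

lemma append_eq_topVtx_iff {m d : ℕ} (ω : Fin m → Bool) (b : Fin d → Bool) :
    Fin.append ω b = topVtx (m + d) ↔ ω = topVtx m ∧ b = topVtx d := by
  constructor
  · intro h
    exact ⟨funext fun i => by simpa [topVtx] using congrFun h (Fin.castAdd d i),
      funext fun i => by simpa [topVtx] using congrFun h (Fin.natAdd m i)⟩
  · rintro ⟨rfl, rfl⟩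
    funext j
    induction j using Fin.addCases <;> simp [topVtx]

lemma mem_inter_faces_iff_eq_topVtx {s k : ℕ} (ω : Fin (s + k) → Bool) :
    (ω ∈ {ω : Fin (s + k) → Bool | ∀ i, ω (Fin.castAddEmb k i) = topVtx s i} ∧
      ω ∈ {ω : Fin (s + k) → Bool | ∀ i, ω (Fin.natAddEmb s i) = topVtx k i}) ↔
      ω = topVtx (s + k) := by
  conv_rhs => rw [← Fin.append_castAdd_natAdd (f := ω), append_eq_topVtx_iff]
  simp [funext_iff]

lemma CubeFamily.IsCubespace.const_mem {X : Type*} [TopologicalSpace X] {S : CubeFamily X}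
    (hS : S.IsCubespace) (n : ℕ) (x : X) :
    (fun _ : Fin n → Bool => x) ∈ S.cubes n :=
  hS.2.2 (fun _ => Fin.elim0) (fun j => j.elim0) (fun _ => x) (hS.2.1 ▸ Set.mem_univ _)

section Uniqueness

variable {X Y : Type*} [TopologicalSpace X] {S : CubeFamily X} {T : CubeFamily Y} {f : X → Y}

lemma HasUniquenessAt.add (hS : S.IsCubespace) {m : ℕ}
    (h : HasUniquenessAt S T f m) (d : ℕ) : HasUniquenessAt S T f (m + d) := by
  intro c hc c' hc' hagree himg
  have hface := h _ (hS.2.2 _ (isDiscreteCubeMorphism_append (topVtx d)) c hc)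
    _ (hS.2.2 _ (isDiscreteCubeMorphism_append (topVtx d)) c' hc')
    (fun ω hω => hagree _ fun htop => hω ((append_eq_topVtx_iff _ _).1 htop).1)
    (funext fun ω => congrFun himg _)
  funext ω
  by_cases hω : ω = topVtx (m + d)
  · have := congrFun hface (topVtx m)
    simp only [(append_eq_topVtx_iff _ _).2 ⟨rfl, rfl⟩] at this
    rw [hω, this]
  · exact hagree ω hω

lemma HasUniquenessAt.mono (hS : S.IsCubespace) {m n : ℕ}
    (h : HasUniquenessAt S T f m) (hmn : m ≤ n) : HasUniquenessAt S T f n := by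
  obtain ⟨d, rfl⟩ := Nat.exists_eq_add_of_le hmn
  exact h.add hS d

end Uniqueness

lemma faceModify_faceModify_comm {X : Type*} {n : ℕ} {F F' : Set (Fin n → Bool)}
    (φ u : X → X) (c : (Fin n → Bool) → X) {ω : Fin n → Bool} (hω : ¬(ω ∈ F ∧ ω ∈ F')) :
    faceModify F' u (faceModify F φ c) ω = faceModify F φ (faceModify F' u c) ω := by
  unfold faceModify
  split_ifs <;> tauto

lemma apply_faceModify_of_fiberwise {X Y : Type*} {n : ℕ} {g : X → Y} {φ : X → X}
    (hgφ : ∀ x, g (φ x) = g x) (F : Set (Fin n → Bool)) (c : (Fin n → Bool) → X)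
    (ω : Fin n → Bool) : g (faceModify F φ c ω) = g (c ω) := by
  unfold faceModify
  split_ifs
  exacts [hgφ _, rfl]

def PreservesCubesOnFaces {X : Type*} (S : CubeFamily X) (φ : X → X) (s : ℕ) : Prop :=
  ∀ (n : ℕ) (F : Set (Fin n → Bool)), IsFaceOfCodim F s →
    ∀ c ∈ S.cubes n, faceModify F φ c ∈ S.cubes n

namespace PreservesCubesOnFaces

variable {X : Type*} {S : CubeFamily X} {φ : X → X} {s : ℕ}

lemma modify_on_tails (hφ : PreservesCubesOnFaces S φ s) {n : ℕ}
    {c : (Fin (n + s) → Bool) → X} (hc : c ∈ S.cubes (n + s)) (B : Finset (Fin s → Bool)) :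
    (fun ω => if (fun i => ω (Fin.natAdd n i)) ∈ B then φ (c ω) else c ω) ∈ S.cubes (n + s) := by
  classical
  induction B using Finset.induction_on with
  | empty => simpa using hc
  | insert b B hb ih =>
    convert hφ _ _ (isFaceOfCodim_of_embedding (Fin.natAddEmb n) b) _ ih using 1
    funext ω
    by_cases h : ∀ i, ω (Fin.natAdd n i) = b i
    · obtain rfl : (fun i => ω (Fin.natAdd n i)) = b := funext h
      simp [faceModify, hb]
    · have hne : (fun i => ω (Fin.natAdd n i)) ≠ b := fun h' => h (congrFun h')
      simp [faceModify, h, hne]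

lemma comp_mem [TopologicalSpace X] (hS : S.IsCubespace) (hφ : PreservesCubesOnFaces S φ s)
    {n : ℕ} {c : (Fin n → Bool) → X} (hc : c ∈ S.cubes n) :
    (fun ω => φ (c ω)) ∈ S.cubes n := by
  have hlift := hS.2.2 _ (isDiscreteCubeMorphism_comp (Fin.castAdd s)) c hc
  have hrestrict := hS.2.2 _ (isDiscreteCubeMorphism_append fun _ : Fin s => false) _
    (hφ.modify_on_tails hlift Finset.univ)
  simpa [Function.comp_def] using hrestrict

variable {Y : Type*} {g : X → Y}

lemma faceModify_mem_fiber (hφ : PreservesCubesOnFaces S φ s) (hgφ : ∀ x, g (φ x) = g x)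
    {n : ℕ} {F : Set (Fin n → Bool)} (hF : IsFaceOfCodim F s) {y : Y}
    {c : (Fin n → Bool) → X} (hc : c ∈ (subFamily S (g ⁻¹' {y})).cubes n) :
    faceModify F φ c ∈ (subFamily S (g ⁻¹' {y})).cubes n :=
  ⟨hφ n F hF c hc.1, fun ω => (apply_faceModify_of_fiberwise hgφ F c ω).trans (hc.2 ω)⟩

variable [TopologicalSpace X]

lemma isTranslationOf_fiber (hS : S.IsCubespace) (hφ : PreservesCubesOnFaces S φ s)
    {ψ : X → X} (hψ : PreservesCubesOnFaces S ψ s) (hψφ : LeftInverse ψ φ)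
    (hgφ : ∀ x, g (φ x) = g x) (y : Y) :
    IsTranslationOf (subFamily S (g ⁻¹' {y})) φ s := by
  refine ⟨fun n c => ⟨fun hc => ?_, fun hc => ?_⟩,
    fun n _ F hF c hc => hφ.faceModify_mem_fiber hgφ hF hc⟩
  · exact ⟨hφ.comp_mem hS hc.1, fun ω => (hgφ _).trans (hc.2 ω)⟩
  · refine ⟨?_, fun ω => (hgφ _).symm.trans (hc.2 ω)⟩
    simpa only [hψφ _] using hψ.comp_mem hS hc.1

lemma commute_of_memAut (hS : S.IsCubespace) {T : CubeFamily Y} {k : ℕ}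
    (huniq : HasUniquenessAt S T g (s + k)) (hφ : PreservesCubesOnFaces S φ s)
    (hgφ : ∀ x, g (φ x) = g x) {u : X → X} (hu : MemAut S g u k) (x : X) :
    φ (u x) = u (φ x) := by
  set F := {ω : Fin (s + k) → Bool | ∀ i, ω (Fin.castAddEmb k i) = topVtx s i}
  set F' := {ω : Fin (s + k) → Bool | ∀ i, ω (Fin.natAddEmb s i) = topVtx k i}
  have hF := isFaceOfCodim_of_embedding (Fin.castAddEmb k) (topVtx s)
  have hF' := isFaceOfCodim_of_embedding (Fin.natAddEmb s) (topVtx k)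
  have hu_tr := (hu.2.2 (g x)).2 (s + k) (Nat.le_add_left k s) F' hF'
  have hconst : (fun _ => x) ∈ (subFamily S (g ⁻¹' {g x})).cubes (s + k) :=
    ⟨hS.const_mem _ x, fun _ => rfl⟩
  have hφu := huniq
    (faceModify F' u (faceModify F φ fun _ => x))
    (hu_tr _ (hφ.faceModify_mem_fiber hgφ hF hconst)).1
    (faceModify F φ (faceModify F' u fun _ => x))
    (hφ _ F hF _ (hu_tr _ hconst).1)
    (fun ω hω => faceModify_faceModify_comm φ u _
      (mt (mem_inter_faces_iff_eq_topVtx ω).1 hω))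
    (funext fun ω => by
      simp only [apply_faceModify_of_fiberwise hgφ, apply_faceModify_of_fiberwise hu.2.1])
  obtain ⟨htop, htop'⟩ : topVtx (s + k) ∈ F ∧ topVtx (s + k) ∈ F' :=
    (mem_inter_faces_iff_eq_topVtx _).2 rfl
  simpa [faceModify, htop, htop'] using (congrFun hφu (topVtx (s + k))).symm

end PreservesCubesOnFaces

theorem structure_group_embeds_general {Z Y A : Type*}
    [MetricSpace Z] [MetricSpace Y]
    [CommGroup A] [TopologicalSpace A]
    [MulAction A Z] [ContinuousSMul A Z]
    (S : CubeFamily Z) (T : CubeFamily Y) (hS : S.IsCubespace)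
    (g : Z → Y) (s : ℕ) (hg : IsSFibration S T g s)
    (hface : ∀ (n : ℕ) (F : Set (Fin n → Bool)), IsFaceOfCodim F s →
      ∀ c ∈ S.cubes n, ∀ a : A, faceModify F (fun z => a • z) c ∈ S.cubes n)
    (hrel : ∀ (a : A) (z : Z), RelCanonRel S g (s - 1) z (a • z)) :
    (∀ a : A, MemAut S g (fun z => a • z) s) ∧
      ∀ (a : A) (k : ℕ), 1 ≤ k → ∀ u : Z → Z, MemAut S g u k →
        ∀ z : Z, a • u z = u (a • z) := by
  have hsmul (a : A) : PreservesCubesOnFaces S (a • ·) s :=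
    fun n F hF c hc => hface n F hF c hc a
  have hg_smul (a : A) (z : Z) : g (a • z) = g z := (hrel a z).2.symm
  refine ⟨fun a => ⟨(Homeomorph.smul a).isHomeomorph, hg_smul a, fun y => ?_⟩,
    fun a k hk u hu z => ?_⟩
  · exact (hsmul a).isTranslationOf_fiber hS (hsmul a⁻¹) (inv_smul_smul a) (hg_smul a) y
  · exact (hsmul a).commute_of_memAut hS (hg.2.mono hS (by omega)) (hg_smul a) hu z

/-- let `g : Z → Y` be an `s`-fibration between compact ergodic gluing
cubespaces with top structure group the compact abelian group `A` (acting on `Z`, with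
`[a]_F·c` a cube for any codimension-`s` face `F`, and with `a • z ∼_{g,s-1} z`).  Then
for each `a ∈ A` the map `z ↦ a • z` lies in `Aut_s(g)`, i.e. `A` embeds into the
`s`-th translation group of `g`; consequently `A` commutes with `Aut_k(g)` for `k ≥ 1`. -/
theorem structure_group_embeds {Z Y A : Type*}
    [MetricSpace Z] [CompactSpace Z] [MetricSpace Y] [CompactSpace Y]
    [CommGroup A] [TopologicalSpace A] [IsTopologicalGroup A] [CompactSpace A]
    [MulAction A Z] [ContinuousSMul A Z]
    (S : CubeFamily Z) (T : CubeFamily Y) (hS : S.IsCubespace) (hT : T.IsCubespace)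
    (heS : IsErgodic S) (heT : IsErgodic T) (hgS : IsGluing S) (hgT : IsGluing T)
    (g : Z → Y) (s : ℕ) (hs : 1 ≤ s) (hg : IsSFibration S T g s)
    (hface : ∀ (n : ℕ) (F : Set (Fin n → Bool)), IsFaceOfCodim F s →
      ∀ c ∈ S.cubes n, ∀ a : A, faceModify F (fun z => a • z) c ∈ S.cubes n)
    (hrel : ∀ (a : A) (z : Z), RelCanonRel S g (s - 1) z (a • z)) :
    (∀ a : A, MemAut S g (fun z => a • z) s) ∧
      ∀ (a : A) (k : ℕ), 1 ≤ k → ∀ u : Z → Z, MemAut S g u k →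
        ∀ z : Z, a • u z = u (a • z) :=
  structure_group_embeds_general S T hS g s hg hface hrel
end
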